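/- Let G = C_{n₁}□⋯□C_{n_r} be the Cartesian product of r even cycles (each n_i a positive even integer, n_i ≥ 4 so the cycles are simple graphs). Then for every vertex v of G, the betweenness centrality is B(v) = (1/8)·[ (∏_{i=1}^r n_i)·(∑_{i=1}^r n_i) − 4·( ∏_{i=1}^r n_i − 1 ) ]. Equivalently, writing n_i = 2k_i, B(v) = 2^{r−2}·(∏_{i=1}^r k_i)·( ∑_{i=1}^r k_i − 2 ) + 1/2. -/

import Mathlib

/-
Summing `B` over all vertices and exchanging the sums, each pair `{u, v}` contributes
`d(u,v) - 1`, since every geodesic from `u` to `v` has exactly `d(u,v) - 1` interior vertices.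
A product of cycles is vertex-transitive (rotate each coordinate), so `B` is constant and
`B(v) = (∑_w d(v,w) - (N - 1)) / 2` with `N = ∏ nᵢ`. Distances in a box product are sums of
coordinate distances, and the distances from a vertex of `C_{2k}` sum to `k²`, so
`∑_w d(v,w) = ∑ᵢ (N / nᵢ) kᵢ² = N (∑ᵢ nᵢ) / 4`.
-/

open SimpleGraph Finset

/-- The number of shortest `u`-`v` paths (geodesics) in `G`:
the number of paths from `u` to `v` whose length equals the distance `d_G(u,v)`. -/
noncomputable def geodesicCount {V : Type*} (G : SimpleGraph V) (u v : V) : ℕ :=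
  Nat.card {p : G.Walk u v // p.IsPath ∧ p.length = G.dist u v}

/-- The number of shortest `u`-`v` paths in `G` that pass through the vertex `x`. -/
noncomputable def geodesicCountThrough {V : Type*} (G : SimpleGraph V) (u v x : V) : ℕ :=
  Nat.card {p : G.Walk u v // p.IsPath ∧ p.length = G.dist u v ∧ x ∈ p.support}

/-- The pair-dependency of the pair `{u,v}` on `x`:
`δ(u,v|x) = σ(u,v|x) / σ(u,v)`. -/
noncomputable def pairDependency {V : Type*} (G : SimpleGraph V) (u v x : V) : ℚ :=
  (geodesicCountThrough G u v x : ℚ) / (geodesicCount G u v : ℚ)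

/-- The betweenness centrality of a vertex `x`: the sum of the pair-dependencies
`σ(u,v|x)/σ(u,v)` over unordered pairs `{u,v}` with `u ≠ v`, `u ≠ x`, `v ≠ x`
(each unordered pair is counted once, hence the factor `1/2` over ordered pairs). -/
noncomputable def betweenness {V : Type*} [Fintype V] [DecidableEq V] (G : SimpleGraph V) (x : V) : ℚ :=
  (1 / 2) * ∑ u, ∑ v,
    if u ≠ v ∧ u ≠ x ∧ v ≠ x then pairDependency G u v x else 0

/-- The Cartesian (box) product of a family of graphs: two tuples are adjacent iff
they agree in all but one coordinate and differ by an edge in that coordinate. -/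
def boxProdPi {ι : Type*} {V : ι → Type*} (G : ∀ i, SimpleGraph (V i)) :
    SimpleGraph (∀ i, V i) where
  Adj u v := ∃ i, (G i).Adj (u i) (v i) ∧ ∀ j, j ≠ i → u j = v j
  symm := by
    constructor
    rintro u v ⟨i, hadj, heq⟩
    exact ⟨i, hadj.symm, fun j hj => (heq j hj).symm⟩
  loopless := by
    constructor
    rintro u ⟨i, hadj, -⟩
    exact (G i).loopless.irrefl _ hadj

theorem Fintype.sum_comp_eval {ι M : Type*} {V : ι → Type*} [Fintype ι] [DecidableEq ι]
    [∀ i, Fintype (V i)] [AddCommMonoid M] (i : ι) (f : V i → M) :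
    ∑ w : ∀ j, V j, f (w i) = (∏ j ∈ univ.erase i, Fintype.card (V j)) • ∑ a, f a := by
  classical
  rw [← Finset.sum_fiberwise univ (fun w : ∀ j, V j => w i) (fun w => f (w i)), smul_sum]
  refine Finset.sum_congr rfl fun a _ => ?_
  have hfiber (w) (hw : w ∈ ({w : ∀ j, V j | w i = a} : Finset _)) : f (w i) = f a := by
    rw [(mem_filter.mp hw).2]
  rw [Finset.sum_congr rfl hfiber, sum_const, ← Fintype.piFinset_univ,
    Fintype.card_filter_piFinset_eq_of_mem (fun j => (univ : Finset (V j))) i (mem_univ a)]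
  rfl

theorem Fin.val_add_eq_succ_or_eq_zero {n : ℕ} (z d : Fin n) (hd : d.val = 1) :
    (z + d).val = z.val + 1 ∨ (z + d).val = 0 ∧ z.val + 1 = n := by
  rw [Fin.val_add, hd]
  rcases (show z.val + 1 ≤ n from z.isLt).lt_or_eq with h | h
  · exact .inl (Nat.mod_eq_of_lt h)
  · exact .inr ⟨by rw [h, Nat.mod_self], h⟩

theorem Finset.sum_range_min_sub (k : ℕ) : ∑ d ∈ range (2 * k), min d (2 * k - d) = k * k := by
  induction k with
  | zero => simp
  | succ k ih =>
    rw [show 2 * (k + 1) = 2 * k + 1 + 1 by ring, sum_range_succ', sum_range_succ]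
    have hshift (d : ℕ) (hd : d ∈ range (2 * k)) :
        min (d + 1) (2 * k + 1 + 1 - (d + 1)) = min d (2 * k - d) + 1 := by
      rw [mem_range] at hd
      omega
    rw [sum_congr rfl hshift, sum_add_distrib, ih, sum_const, card_range, smul_eq_mul, mul_one]
    grind

namespace SimpleGraph

def IsVertexTransitive {V : Type*} (G : SimpleGraph V) : Prop :=
  ∀ u v, ∃ f : G ≃g G, f u = v

section Metric

variable {V W : Type*} {G : SimpleGraph V} {H : SimpleGraph W} {u v : V}

theorem Hom.edist_le (f : G →g H) (u v : V) : H.edist (f u) (f v) ≤ G.edist u v := by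
  by_cases h : G.Reachable u v
  · obtain ⟨p, hp⟩ := h.exists_walk_length_eq_edist
    exact hp ▸ (SimpleGraph.edist_le (p.map f)).trans_eq (by simp)
  · simp [edist_eq_top_of_not_reachable h]

theorem Iso.edist_eq (f : G ≃g H) (u v : V) : H.edist (f u) (f v) = G.edist u v :=
  le_antisymm (f.toHom.edist_le u v) (by simpa using f.symm.toHom.edist_le (f u) (f v))

theorem Iso.dist_eq (f : G ≃g H) (u v : V) : H.dist (f u) (f v) = G.dist u v := by
  rw [dist, dist, f.edist_eq]

theorem Walk.le_add_length_of_adj_le {φ : V → ℕ} (hφ : ∀ a b, G.Adj a b → φ a ≤ φ b + 1)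
    (p : G.Walk u v) : φ u ≤ φ v + p.length := by
  induction p with
  | nil => simp
  | cons h p ih =>
    have := hφ _ _ h
    rw [Walk.length_cons]
    omega

theorem Reachable.le_add_dist_of_adj_le (h : G.Reachable u v) {φ : V → ℕ}
    (hφ : ∀ a b, G.Adj a b → φ a ≤ φ b + 1) : φ u ≤ φ v + G.dist u v := by
  obtain ⟨p, hp⟩ := h.exists_walk_length_eq_dist
  exact hp ▸ p.le_add_length_of_adj_le hφ

theorem IsVertexTransitive.sum_dist_eq [Fintype V] (hT : G.IsVertexTransitive) (u v : V) :
    ∑ w, G.dist u w = ∑ w, G.dist v w := by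
  obtain ⟨f, rfl⟩ := hT v u
  rw [← f.toEquiv.sum_comp]
  simp [f.dist_eq]

end Metric

section Betweenness

variable {V W : Type*} {G : SimpleGraph V} {H : SimpleGraph W} {u v : V}

def Iso.walkEquiv (f : G ≃g H) (u v : V) : G.Walk u v ≃ H.Walk (f u) (f v) where
  toFun p := p.map f.toHom
  invFun q := (q.map f.symm.toHom).copy (f.symm_apply_apply u) (f.symm_apply_apply v)
  left_inv p := Walk.ext_support <| by
    simp [-Walk.map_map, Walk.support_copy, Function.comp_def]
  right_inv q := Walk.ext_support <| by
    simp [-Walk.map_map, Walk.support_copy, Function.comp_def]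

theorem geodesicCountThrough_left (u v : V) :
    geodesicCountThrough G u v u = geodesicCount G u v :=
  Nat.card_congr <| Equiv.subtypeEquivRight fun p => by simp [p.start_mem_support]

theorem Iso.geodesicCountThrough_eq (f : G ≃g H) (u v x : V) :
    geodesicCountThrough H (f u) (f v) (f x) = geodesicCountThrough G u v x := by
  refine (Nat.card_congr <| (f.walkEquiv u v).subtypeEquiv fun p => ?_).symm
  simp [walkEquiv, Walk.isPath_map_iff_of_injective (f := f.toHom) f.injective, f.dist_eq]

theorem Iso.geodesicCount_eq (f : G ≃g H) (u v : V) :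
    geodesicCount H (f u) (f v) = geodesicCount G u v := by
  rw [← geodesicCountThrough_left, ← geodesicCountThrough_left, f.geodesicCountThrough_eq]

theorem Iso.pairDependency_eq (f : G ≃g H) (u v x : V) :
    pairDependency H (f u) (f v) (f x) = pairDependency G u v x := by
  rw [pairDependency, pairDependency, f.geodesicCount_eq, f.geodesicCountThrough_eq]

theorem Iso.betweenness_eq [Fintype V] [DecidableEq V] [Fintype W] [DecidableEq W]
    (f : G ≃g H) (x : V) : betweenness H (f x) = betweenness G x := by
  rw [betweenness, betweenness, ← f.toEquiv.sum_comp]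
  refine congrArg _ (Finset.sum_congr rfl fun u _ => ?_)
  rw [← f.toEquiv.sum_comp]
  refine Finset.sum_congr rfl fun w _ => ?_
  simp [f.injective.ne_iff, f.pairDependency_eq]

theorem geodesicCount_pos [Finite V] (h : G.Reachable u v) : 0 < geodesicCount G u v := by
  classical
  have := Fintype.ofFinite V
  obtain ⟨p, hp⟩ := h.exists_walk_length_eq_dist
  have : Nonempty {p : G.Walk u v // p.IsPath ∧ p.length = G.dist u v} :=
    ⟨⟨p, p.isPath_of_length_eq_dist hp, hp⟩⟩
  exact Nat.card_pos

variable [Fintype V] [DecidableEq V]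

theorem sum_geodesicCountThrough (huv : u ≠ v) :
    ∑ x ∈ univ \ {u, v}, geodesicCountThrough G u v x = geodesicCount G u v * (G.dist u v - 1) := by
  classical
  let T := {p : G.Walk u v // p.IsPath ∧ p.length = G.dist u v}
  have hthrough (x : V) : geodesicCountThrough G u v x = #{p : T | x ∈ p.1.support} := by
    rw [geodesicCountThrough, ← Fintype.card_subtype, ← Nat.card_eq_fintype_card]
    exact Nat.card_congr <| (Equiv.subtypeEquivRight fun p => and_assoc.symm).trans
      (Equiv.subtypeSubtypeEquivSubtypeInter _ _).symm
  have hinterior (p : T) : #{x ∈ univ \ {u, v} | x ∈ p.1.support} = G.dist u v - 1 := by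
    have : {x ∈ univ \ {u, v} | x ∈ p.1.support} = p.1.support.toFinset \ {u, v} := by
      ext; simp [and_comm]
    rw [this, card_sdiff_of_subset, List.toFinset_card_of_nodup p.2.1.support_nodup,
      Walk.length_support, p.2.2, card_pair huv]
    · omega
    · simp [insert_subset_iff]
  calc ∑ x ∈ univ \ {u, v}, geodesicCountThrough G u v x
      = ∑ x ∈ univ \ {u, v}, #{p : T | x ∈ p.1.support} := sum_congr rfl fun x _ => hthrough x
    _ = ∑ p : T, #{x ∈ univ \ {u, v} | x ∈ p.1.support} :=
        sum_card_bipartiteAbove_eq_sum_card_bipartiteBelow _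
    _ = geodesicCount G u v * (G.dist u v - 1) := by
        simp [hinterior, geodesicCount, T]

theorem sum_pairDependency (h : G.Reachable u v) (huv : u ≠ v) :
    ∑ x ∈ univ \ {u, v}, pairDependency G u v x = (G.dist u v : ℚ) - 1 := by
  have hpos : (geodesicCount G u v : ℚ) ≠ 0 := by exact_mod_cast (geodesicCount_pos h).ne'
  simp only [pairDependency, ← sum_div]
  rw [← Nat.cast_sum, sum_geodesicCountThrough huv, Nat.cast_mul,
    Nat.cast_sub (h.pos_dist_of_ne huv)]
  field_simp
  ring

theorem sum_betweenness (hG : G.Connected) :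
    ∑ x, betweenness G x = ∑ u, ((∑ v, (G.dist u v : ℚ)) - (Fintype.card V - 1)) / 2 := by
  have hpair (u v : V) : ∑ x, (if u ≠ v ∧ u ≠ x ∧ v ≠ x then pairDependency G u v x else 0)
      = (G.dist u v : ℚ) - if u ≠ v then 1 else 0 := by
    by_cases huv : u = v
    · simp [huv]
    · rw [if_pos huv, ← sum_pairDependency (hG.preconnected u v) huv, ← sum_filter]
      congr 1
      ext x
      simp [eq_comm, huv]
  calc ∑ x, betweenness G x
      = ∑ u, (∑ v, ∑ x, if u ≠ v ∧ u ≠ x ∧ v ≠ x then pairDependency G u v x else 0) / 2 := by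
        simp only [betweenness, ← mul_sum, ← sum_div]
        rw [sum_comm, sum_congr rfl fun u _ => sum_comm]
        ring
    _ = _ := by
        refine sum_congr rfl fun u _ => ?_
        rw [sum_congr rfl fun v _ => hpair u v, sum_sub_distrib, sum_boole]
        simp [filter_ne, card_univ, Nat.cast_sub (Fintype.card_pos_iff.mpr ⟨u⟩)]

theorem IsVertexTransitive.betweenness_eq (hT : G.IsVertexTransitive) (hG : G.Connected) (x : V) :
    betweenness G x = ((∑ v, (G.dist x v : ℚ)) - (Fintype.card V - 1)) / 2 := by
  have hsum := sum_betweenness hG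
  have hB (y : V) : betweenness G y = betweenness G x := by
    obtain ⟨f, rfl⟩ := hT x y
    exact f.betweenness_eq x
  have hD (u : V) : ∑ v, (G.dist u v : ℚ) = ∑ v, (G.dist x v : ℚ) := by
    exact_mod_cast hT.sum_dist_eq u x
  simp only [hB, hD, sum_const, card_univ, nsmul_eq_mul] at hsum
  have hcard : (Fintype.card V : ℚ) ≠ 0 := by exact_mod_cast (Fintype.card_pos_iff.mpr ⟨x⟩).ne'
  exact mul_left_cancel₀ hcard hsum

end Betweenness

section BoxProdPi

variable {ι : Type*} {V W : ι → Type*} {G : ∀ i, SimpleGraph (V i)} {H : ∀ i, SimpleGraph (W i)}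

def Iso.boxProdPi (f : ∀ i, G i ≃g H i) : boxProdPi G ≃g boxProdPi H where
  toEquiv := Equiv.piCongrRight fun i => (f i).toEquiv
  map_rel_iff' {u v} := by
    refine ⟨fun ⟨i, hadj, heq⟩ => ⟨i, ?_, fun j hj => ?_⟩,
      fun ⟨i, hadj, heq⟩ => ⟨i, ?_, fun j hj => ?_⟩⟩
    · exact (f i).map_rel_iff.mp hadj
    · exact (f j).injective (heq j hj)
    · exact (f i).map_rel_iff.mpr hadj
    · exact congrArg (f j) (heq j hj)

theorem IsVertexTransitive.boxProdPi (hT : ∀ i, (G i).IsVertexTransitive) :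
    (boxProdPi G).IsVertexTransitive := by
  intro x y
  choose f hf using fun i => hT i (x i) (y i)
  exact ⟨Iso.boxProdPi f, funext hf⟩

def boxProdPiUpdateHom [DecidableEq ι] (z : ∀ i, V i) (i : ι) : G i →g boxProdPi G where
  toFun a := Function.update z i a
  map_rel' h := ⟨i, by simpa using h, fun j hj => by simp [hj]⟩

variable [Fintype ι]

theorem boxProdPi_exists_walk (hG : ∀ i, (G i).Preconnected) (u v : ∀ i, V i) :
    ∃ p : (boxProdPi G).Walk u v, p.length = ∑ i, (G i).dist (u i) (v i) := by
  classical
  suffices ∀ s : Finset ι, ∃ p : (boxProdPi G).Walk u (s.piecewise v u),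
      p.length = ∑ i ∈ s, (G i).dist (u i) (v i) by
    obtain ⟨p, hp⟩ := this univ
    exact ⟨p.copy rfl (piecewise_univ _ _), by simpa using hp⟩
  intro s
  induction s using Finset.induction_on with
  | empty => exact ⟨Walk.nil.copy rfl (by simp), by simp⟩
  | insert i s hi ih =>
    obtain ⟨p, hp⟩ := ih
    obtain ⟨q, hq⟩ := (hG i (u i) (v i)).exists_walk_length_eq_dist
    have hstart : boxProdPiUpdateHom (G := G) (s.piecewise v u) i (u i) = s.piecewise v u :=
      Function.update_eq_self_iff.mpr (by simp [hi])
    have hend : boxProdPiUpdateHom (G := G) (s.piecewise v u) i (v i) =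
        (insert i s).piecewise v u :=
      (piecewise_insert ..).symm
    refine ⟨p.append ((q.map (boxProdPiUpdateHom (s.piecewise v u) i)).copy hstart hend), ?_⟩
    rw [Walk.length_append, Walk.length_copy, Walk.length_map, hp, hq, sum_insert hi, add_comm]

theorem boxProdPi_connected (hG : ∀ i, (G i).Connected) : (boxProdPi G).Connected := by
  have := fun i => (hG i).nonempty
  exact ⟨fun u v => (boxProdPi_exists_walk (fun i => (hG i).preconnected) u v).elim
    fun p _ => ⟨p⟩⟩

theorem boxProdPi_dist (hG : ∀ i, (G i).Preconnected) (u v : ∀ i, V i) :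
    (boxProdPi G).dist u v = ∑ i, (G i).dist (u i) (v i) := by
  classical
  obtain ⟨p, hp⟩ := boxProdPi_exists_walk hG u v
  refine le_antisymm (hp ▸ dist_le p) ?_
  have hlip (a b : ∀ i, V i) (hab : (boxProdPi G).Adj a b) :
      ∑ i, (G i).dist (a i) (v i) ≤ ∑ i, (G i).dist (b i) (v i) + 1 := by
    obtain ⟨i, hadj, heq⟩ := hab
    rw [← add_sum_erase _ _ (mem_univ i), ← add_sum_erase _ _ (mem_univ i),
      sum_congr rfl fun j hj => by rw [heq j (ne_of_mem_erase hj)]]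
    have := (hG i (a i) (b i)).dist_triangle_left (v i)
    rw [dist_eq_one_iff_adj.mpr hadj] at this
    omega
  simpa using (Reachable.le_add_dist_of_adj_le ⟨p⟩ hlip :)

theorem sum_boxProdPi_dist [DecidableEq ι] [∀ i, Fintype (V i)] (hG : ∀ i, (G i).Preconnected)
    (u : ∀ i, V i) : ∑ w, (boxProdPi G).dist u w =
      ∑ i, (∏ j ∈ univ.erase i, Fintype.card (V j)) * ∑ a, (G i).dist (u i) a := by
  simp_rw [boxProdPi_dist hG, ← smul_eq_mul, ← Fintype.sum_comp_eval]
  exact sum_comm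

end BoxProdPi

section Cycle

variable {n : ℕ}

theorem cycleGraph_isVertexTransitive : (cycleGraph n).IsVertexTransitive := by
  intro a b
  have := NeZero.of_pos a.pos
  refine ⟨⟨Equiv.addRight (b - a), fun {x y} => ?_⟩, by simp⟩
  simp [cycleGraph_adj', add_sub_add_right_eq_sub]

theorem cycleGraph_exists_walk (hn : 2 ≤ n) (u v : Fin n) :
    ∃ p : (cycleGraph n).Walk u v, p.length = (v - u).val := by
  have := NeZero.of_pos u.pos
  have hone : (1 : Fin n).val = 1 := by rw [Fin.val_one', Nat.mod_eq_of_lt hn]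
  generalize hm : (v - u).val = m
  induction m generalizing v with
  | zero =>
    obtain rfl : v = u := sub_eq_zero.mp (Fin.ext hm)
    exact ⟨.nil, rfl⟩
  | succ m ih =>
    have hstep : (v - 1 - u).val = m := by
      have := Fin.val_add_eq_succ_or_eq_zero (v - 1 - u) 1 hone
      rw [show v - 1 - u + 1 = v - u by rw [sub_right_comm, sub_add_cancel], hm] at this
      omega
    obtain ⟨p, hp⟩ := ih (v - 1) hstep
    have hadj : (cycleGraph n).Adj (v - 1) v := cycleGraph_adj'.mpr (.inr (by simpa using hone))
    exact ⟨p.concat hadj, by rw [Walk.length_concat, hp]⟩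

theorem cycleGraph_dist (hn : 2 ≤ n) (u v : Fin n) :
    (cycleGraph n).dist u v = min (v - u).val (n - (v - u).val) := by
  have := NeZero.of_pos u.pos
  refine le_antisymm (le_min ?_ ?_) ?_
  · obtain ⟨p, hp⟩ := cycleGraph_exists_walk hn u v
    exact hp ▸ dist_le p
  · obtain ⟨p, hp⟩ := cycleGraph_exists_walk hn v u
    rw [dist_comm]
    refine (dist_le p).trans ?_
    rw [hp, ← neg_sub, Fin.val_neg']
    exact Nat.mod_le _ _
  · have hlip (a b : Fin n) (hab : (cycleGraph n).Adj a b) :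
        min (v - a).val (n - (v - a).val) ≤ min (v - b).val (n - (v - b).val) + 1 := by
      have ha := (v - a).isLt
      have hb := (v - b).isLt
      rcases cycleGraph_adj'.mp hab with h | h
      · have := Fin.val_add_eq_succ_or_eq_zero (v - a) (a - b) h
        rw [sub_add_sub_cancel] at this
        omega
      · have := Fin.val_add_eq_succ_or_eq_zero (v - b) (b - a) h
        rw [sub_add_sub_cancel] at this
        omega
    simpa using (cycleGraph_preconnected u v).le_add_dist_of_adj_le hlip

theorem sum_cycleGraph_dist {k : ℕ} (hn : n = 2 * k) (u : Fin n) :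
    ∑ v, (cycleGraph n).dist u v = k * k := by
  have := NeZero.of_pos u.pos
  simp_rw [cycleGraph_dist (by have := u.pos; omega : 2 ≤ n) u]
  calc ∑ v : Fin n, min (v - u).val (n - (v - u).val)
      = ∑ z : Fin n, min z.val (n - z.val) :=
        (Equiv.subRight u).sum_comp fun z => min z.val (n - z.val)
    _ = ∑ d ∈ range n, min d (n - d) := Fin.sum_univ_eq_sum_range (fun d => min d (n - d)) n
    _ = k * k := by rw [hn, sum_range_min_sub]

end Cycle

theorem betweenness_boxProdPi_cycleGraph {ι : Type*} [Fintype ι] [DecidableEq ι] (n k : ι → ℕ)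
    (hk : ∀ i, n i = 2 * k i) (v : ∀ i, Fin (n i)) :
    betweenness (boxProdPi fun i => cycleGraph (n i)) v =
      ((∑ i, (∏ j ∈ univ.erase i, n j) * (k i * k i) : ℕ) - ((∏ i, n i : ℕ) - 1 : ℚ)) / 2 := by
  have hconn (i : ι) : (cycleGraph (n i)).Connected :=
    @Connected.mk _ _ cycleGraph_preconnected ⟨v i⟩
  rw [(IsVertexTransitive.boxProdPi fun i => cycleGraph_isVertexTransitive).betweenness_eq
    (boxProdPi_connected hconn), ← Nat.cast_sum,
    sum_boxProdPi_dist (fun i => (hconn i).preconnected)]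
  simp [sum_cycleGraph_dist (hk _), Fintype.card_pi]

end SimpleGraph

theorem betweenness_boxProdPi_evenCycles_general {r : ℕ} (n k : Fin r → ℕ)
    (hk : ∀ i, n i = 2 * k i)
    (v : ∀ i, Fin (n i)) :
    betweenness (boxProdPi fun i => cycleGraph (n i)) v =
        (1 / 8) * ((∏ i, (n i : ℚ)) * (∑ i, (n i : ℚ)) - 4 * ((∏ i, (n i : ℚ)) - 1)) ∧
    betweenness (boxProdPi fun i => cycleGraph (n i)) v =
        (2 : ℚ) ^ ((r : ℤ) - 2) * (∏ i, (k i : ℚ)) * ((∑ i, (k i : ℚ)) - 2) + 1 / 2 := by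
  have hkq (i : Fin r) : (n i : ℚ) = 2 * k i := by exact_mod_cast hk i
  have htransmission : ((∑ i, (∏ j ∈ univ.erase i, n j) * (k i * k i) : ℕ) : ℚ) =
      (∏ i, (n i : ℚ)) * (∑ i, (n i : ℚ)) / 4 := by
    push_cast
    rw [mul_sum, sum_div]
    refine sum_congr rfl fun i _ => ?_
    rw [← prod_erase_mul _ _ (mem_univ i), hkq i]
    ring
  have hprod : ∏ i, (n i : ℚ) = 2 ^ r * ∏ i, (k i : ℚ) := by
    simp [hkq, prod_mul_distrib]
  have hsum : ∑ i, (n i : ℚ) = 2 * ∑ i, (k i : ℚ) := by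
    simp [hkq, mul_sum]
  have hpow : (2 : ℚ) ^ ((r : ℤ) - 2) = 2 ^ r / 4 := by
    rw [zpow_sub₀ two_ne_zero, zpow_natCast]
    norm_num
  rw [betweenness_boxProdPi_cycleGraph n k hk v, htransmission, Nat.cast_prod]
  constructor
  · ring
  · rw [hprod, hsum, hpow]
    ring

/-- For the Cartesian product `G = C_{n₁} □ ⋯ □ C_{n_r}` of even
cycles (each `nᵢ` even, `nᵢ ≥ 4`), every vertex `v` satisfies
`B(v) = (1/8)·[ (∏ᵢ nᵢ)·(∑ᵢ nᵢ) - 4·(∏ᵢ nᵢ - 1) ]`; equivalently, with `nᵢ = 2kᵢ`,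
`B(v) = 2^(r-2)·(∏ᵢ kᵢ)·(∑ᵢ kᵢ - 2) + 1/2` (rational power of `2`). -/
theorem betweenness_boxProdPi_evenCycles {r : ℕ} (n k : Fin r → ℕ)
    (heven : ∀ i, Even (n i)) (hn : ∀ i, 4 ≤ n i) (hk : ∀ i, n i = 2 * k i)
    (v : ∀ i, Fin (n i)) :
    betweenness (boxProdPi fun i => cycleGraph (n i)) v =
        (1 / 8) * ((∏ i, (n i : ℚ)) * (∑ i, (n i : ℚ)) - 4 * ((∏ i, (n i : ℚ)) - 1)) ∧
    betweenness (boxProdPi fun i => cycleGraph (n i)) v =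
        (2 : ℚ) ^ ((r : ℤ) - 2) * (∏ i, (k i : ℚ)) * ((∑ i, (k i : ℚ)) - 2) + 1 / 2 :=
  betweenness_boxProdPi_evenCycles_general n k hk v
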